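/- arXiv:1810.01385 — 2 statements merged into one kernel-verified Lean document; each statement's English description precedes it below -/
import Mathlib

section
/- Let $1<q<\infty$ and let $(u_n)$ be a bounded sequence in $L^q(\mathbb{R}^d)$ with $u_n(x) \to u_\infty(x)$ for almost every $x$, where $u_\infty \in L^q(\mathbb{R}^d)$. Then $\lim_{n\to\infty} \int_{\mathbb{R}^d} \big| |u_n|^q - |u_n - u_\infty|^q - |u_\infty|^q \big|\,dx = 0$. -/
open MeasureTheory Filter Topology

/-!
By convexity of `t ↦ t ^ q`, for every `ε > 0` there is `C_ε` with
`|‖a + b‖ ^ q - ‖a‖ ^ q| ≤ ε ‖a‖ ^ q + C_ε ‖b‖ ^ q`. With `a = uₙ - u`, `b = u`, the integrand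
`gₙ` satisfies `gₙ ≤ ε ‖uₙ - u‖ ^ q + C_ε ‖u‖ ^ q`. Hence `(gₙ - ε ‖uₙ - u‖ ^ q)⁺` is dominated by
`C_ε ‖u‖ ^ q` and tends to `0` a.e., so its integral tends to `0` by dominated convergence, while
`ε ∫ ‖uₙ - u‖ ^ q` is at most `ε` times a uniform bound.
-/

theorem Real.add_rpow_le_div_rpow_add_div_rpow {q a b θ : ℝ} (hq : 1 ≤ q) (ha : 0 ≤ a)
    (hb : 0 ≤ b) (hθ₀ : 0 < θ) (hθ₁ : θ < 1) :
    (a + b) ^ q ≤ a ^ q / θ ^ (q - 1) + b ^ q / (1 - θ) ^ (q - 1) := by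
  have hθ' : 0 < 1 - θ := sub_pos.2 hθ₁
  have key := (convexOn_rpow hq).2 (Set.mem_Ici.2 (div_nonneg ha hθ₀.le))
    (Set.mem_Ici.2 (div_nonneg hb hθ'.le)) hθ₀.le hθ'.le (add_sub_cancel θ 1)
  have hw : ∀ w c : ℝ, 0 < w → 0 ≤ c → w • (c / w) ^ q = c ^ q / w ^ (q - 1) := by
    intro w c hw hc
    rw [smul_eq_mul, Real.div_rpow hc hw.le, Real.rpow_sub_one hw.ne']
    field_simp
  simpa only [hw θ a hθ₀ ha, hw (1 - θ) b hθ' hb, smul_eq_mul,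
    mul_div_cancel₀ _ hθ₀.ne', mul_div_cancel₀ _ hθ'.ne'] using key

theorem norm_add_rpow_le_div_rpow_add_div_rpow {E : Type*} [SeminormedAddGroup E] {q θ : ℝ}
    (hq : 1 ≤ q) (hθ₀ : 0 < θ) (hθ₁ : θ < 1) (a b : E) :
    ‖a + b‖ ^ q ≤ ‖a‖ ^ q / θ ^ (q - 1) + ‖b‖ ^ q / (1 - θ) ^ (q - 1) :=
  (Real.rpow_le_rpow (norm_nonneg _) (norm_add_le a b) (by linarith)).trans
    (Real.add_rpow_le_div_rpow_add_div_rpow hq (norm_nonneg a) (norm_nonneg b) hθ₀ hθ₁)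

theorem exists_abs_norm_add_rpow_sub_le {E : Type*} [SeminormedAddCommGroup E] {q ε : ℝ}
    (hq : 1 ≤ q) (hε : 0 < ε) :
    ∃ C, ∀ a b : E, |‖a + b‖ ^ q - ‖a‖ ^ q| ≤ ε * ‖a‖ ^ q + C * ‖b‖ ^ q := by
  have hlim : Tendsto (fun θ : ℝ => θ ^ (q - 1)) (𝓝[<] 1) (𝓝 1) := by
    simpa using ((Real.continuousAt_rpow_const 1 (q - 1) (Or.inl one_ne_zero)).tendsto).mono_left
      nhdsWithin_le_nhds
  obtain ⟨θ, hθ_close, hθ₀, hθ₁⟩ := ((hlim.eventually (lt_mem_nhds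
    (inv_lt_one_of_one_lt₀ (lt_add_of_pos_right 1 hε)))).and
    ((Ioo_mem_nhdsLT (zero_lt_one' ℝ)))).exists
  set s := θ ^ (q - 1)
  set t := (1 - θ) ^ (q - 1)
  have hs₀ : 0 < s := Real.rpow_pos_of_pos hθ₀ _
  have hs₁ : s ≤ 1 := Real.rpow_le_one hθ₀.le hθ₁.le (by linarith)
  have ht : 0 < t := Real.rpow_pos_of_pos (sub_pos.2 hθ₁) _
  have hs_inv : s⁻¹ ≤ 1 + ε := (inv_lt_of_inv_lt₀ (by linarith) hθ_close).le
  have hs_sub : 1 - s ≤ ε := by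
    have h := mul_le_mul_of_nonneg_right hs_inv hs₀.le
    rw [inv_mul_cancel₀ hs₀.ne'] at h
    nlinarith
  -- Bound `‖a + b‖` through `a` and `b`, and `‖a‖` through `a + b` and `-b`.
  refine ⟨t⁻¹, fun a b => abs_sub_le_iff.2 ⟨?_, ?_⟩⟩
  · have h := norm_add_rpow_le_div_rpow_add_div_rpow (E := E) hq hθ₀ hθ₁ a b
    have : ‖a‖ ^ q / s ≤ (1 + ε) * ‖a‖ ^ q := by
      rw [div_eq_inv_mul]; exact mul_le_mul_of_nonneg_right hs_inv (by positivity)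
    rw [div_eq_inv_mul _ t] at h
    linarith
  · have h := norm_add_rpow_le_div_rpow_add_div_rpow (E := E) hq hθ₀ hθ₁ (a + b) (-b)
    rw [add_neg_cancel_right, norm_neg] at h
    have h' := mul_le_mul_of_nonneg_left h hs₀.le
    rw [mul_add, mul_div_cancel₀ _ hs₀.ne', div_eq_inv_mul _ t] at h'
    have : s * (t⁻¹ * ‖b‖ ^ q) ≤ t⁻¹ * ‖b‖ ^ q :=
      mul_le_of_le_one_left (by positivity) hs₁
    nlinarith [Real.rpow_nonneg (norm_nonneg a) q]

theorem exists_abs_norm_rpow_sub_sub_le {E : Type*} [SeminormedAddCommGroup E] {q ε : ℝ}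
    (hq : 1 ≤ q) (hε : 0 < ε) :
    ∃ C, ∀ a b : E, |‖a‖ ^ q - ‖a - b‖ ^ q - ‖b‖ ^ q| ≤ ε * ‖a - b‖ ^ q + C * ‖b‖ ^ q := by
  obtain ⟨C, hC⟩ := exists_abs_norm_add_rpow_sub_le (E := E) hq hε
  refine ⟨C + 1, fun a b => ?_⟩
  have h := hC (a - b) b
  rw [sub_add_cancel] at h
  have h' := abs_sub (‖a‖ ^ q - ‖a - b‖ ^ q) (‖b‖ ^ q)
  rw [abs_of_nonneg (Real.rpow_nonneg (norm_nonneg b) q)] at h'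
  linarith

namespace MeasureTheory

variable {α : Type*} [MeasurableSpace α] {μ : Measure α}

section Domination

variable {g h : ℕ → α → ℝ} {k : α → ℝ} {ε C : ℝ}

theorem tendsto_integral_max_sub_mul_of_le (hg : ∀ n, Integrable (g n) μ)
    (hh : ∀ n, Integrable (h n) μ) (hk : Integrable k μ) (hh_nonneg : ∀ n x, 0 ≤ h n x)
    (hε : 0 ≤ ε) (hdom : ∀ n x, g n x ≤ ε * h n x + C * k x)
    (hlim : ∀ᵐ x ∂μ, Tendsto (g · x) atTop (𝓝 0)) :
    Tendsto (fun n => ∫ x, max (g n x - ε * h n x) 0 ∂μ) atTop (𝓝 0) := by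
  have hbound : ∀ n x, ‖max (g n x - ε * h n x) 0‖ ≤ ‖C * k x‖ := fun n x => by
    rw [Real.norm_of_nonneg (le_max_right _ _)]
    exact max_le (by linarith [hdom n x, le_abs_self (C * k x), Real.norm_eq_abs (C * k x)])
      (norm_nonneg _)
  have hpoint : ∀ n x, max (g n x - ε * h n x) 0 ≤ max (g n x) 0 := fun n x =>
    max_le_max_right 0 (sub_le_self _ (mul_nonneg hε (hh_nonneg n x)))
  simpa using tendsto_integral_of_dominated_convergence (fun x => ‖C * k x‖)
    (fun n => ((hg n).sub ((hh n).const_mul ε)).pos_part.aestronglyMeasurable)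
    (hk.const_mul C).norm (fun n => .of_forall (hbound n))
    (hlim.mono fun x hx => squeeze_zero (fun n => le_max_right _ _) (fun n => hpoint n x)
      (by simpa using hx.max (tendsto_const_nhds (x := (0 : ℝ)))))

theorem tendsto_integral_of_le_mul_add {M : ℝ} (hg : ∀ n, Integrable (g n) μ)
    (hh : ∀ n, Integrable (h n) μ) (hk : Integrable k μ) (hg_nonneg : ∀ n x, 0 ≤ g n x)
    (hh_nonneg : ∀ n x, 0 ≤ h n x) (hM : ∀ n, ∫ x, h n x ∂μ ≤ M)
    (hdom : ∀ ε > 0, ∃ C, ∀ n x, g n x ≤ ε * h n x + C * k x)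
    (hlim : ∀ᵐ x ∂μ, Tendsto (g · x) atTop (𝓝 0)) :
    Tendsto (fun n => ∫ x, g n x ∂μ) atTop (𝓝 0) := by
  refine tendsto_order.2 ⟨fun a ha => .of_forall fun n => ha.trans_le
    (integral_nonneg (hg_nonneg n)), fun b hb => ?_⟩
  have hsmall : ∀ᶠ ε in 𝓝[>] (0 : ℝ), ε * M < b / 2 :=
    nhdsWithin_le_nhds <| ((continuous_mul_const M).tendsto' 0 0 (zero_mul M)).eventually
      (gt_mem_nhds (half_pos hb))
  obtain ⟨ε, hεM, hε⟩ := (hsmall.and self_mem_nhdsWithin).exists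
  obtain ⟨C, hC⟩ := hdom ε hε
  filter_upwards [(tendsto_integral_max_sub_mul_of_le hg hh hk hh_nonneg hε.le hC hlim).eventually
    (gt_mem_nhds (half_pos hb))] with n hn
  have hsplit : ∫ x, g n x ∂μ ≤ ∫ x, max (g n x - ε * h n x) 0 ∂μ + ε * ∫ x, h n x ∂μ := by
    have hW : Integrable (fun x => max (g n x - ε * h n x) 0) μ :=
      ((hg n).sub ((hh n).const_mul ε)).pos_part
    rw [← integral_const_mul, ← integral_add hW ((hh n).const_mul ε)]
    exact integral_mono (hg n) (hW.add ((hh n).const_mul ε)) fun x =>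
      by linarith [le_max_left (g n x - ε * h n x) 0]
  nlinarith [hM n]

end Domination

section Lp

variable {E : Type*} [NormedAddCommGroup E] {f g : α → E} {q : ℝ}

theorem MemLp.integrable_norm_rpow_ofReal (hq : 0 < q) (hf : MemLp f (ENNReal.ofReal q) μ) :
    Integrable (fun x => ‖f x‖ ^ q) μ := by
  simpa [ENNReal.toReal_ofReal hq.le] using
    hf.integrable_norm_rpow (ENNReal.ofReal_pos.2 hq).ne' ENNReal.ofReal_ne_top

theorem integral_norm_rpow_eq_lpNorm_rpow (hq : 0 < q) (hf : AEStronglyMeasurable f μ) :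
    ∫ x, ‖f x‖ ^ q ∂μ = lpNorm f (ENNReal.ofReal q) μ ^ q := by
  rw [lpNorm_eq_integral_norm_rpow_toReal (ENNReal.ofReal_pos.2 hq).ne' ENNReal.ofReal_ne_top hf,
    ENNReal.toReal_ofReal hq.le, ← Real.rpow_mul (integral_nonneg fun x => by positivity),
    inv_mul_cancel₀ hq.ne', Real.rpow_one]

theorem integral_norm_sub_rpow_le (hq : 1 ≤ q) (hf : MemLp f (ENNReal.ofReal q) μ)
    (hg : MemLp g (ENNReal.ofReal q) μ) :
    ∫ x, ‖f x - g x‖ ^ q ∂μ ≤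
      (lpNorm f (ENNReal.ofReal q) μ + lpNorm g (ENNReal.ofReal q) μ) ^ q := by
  calc ∫ x, ‖f x - g x‖ ^ q ∂μ = lpNorm (f - g) (ENNReal.ofReal q) μ ^ q :=
        integral_norm_rpow_eq_lpNorm_rpow (by linarith) (hf.sub hg).aestronglyMeasurable
    _ ≤ _ := Real.rpow_le_rpow lpNorm_nonneg
        (lpNorm_sub_le hf (by simpa using ENNReal.ofReal_le_ofReal hq)) (by linarith)

end Lp

end MeasureTheory

/-- the Brezis–Lieb lemma. -/
theorem brezis_lieb (d : ℕ) (q : ℝ) (hq : 1 < q)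
    (u : ℕ → (Fin d → ℝ) → ℂ) (uinf : (Fin d → ℝ) → ℂ)
    (hmem : ∀ n, MemLp (u n) (ENNReal.ofReal q) volume)
    (hbdd : ∃ C : ℝ, ∀ n, (eLpNorm (u n) (ENNReal.ofReal q) volume).toReal ≤ C)
    (hae : ∀ᵐ x ∂(volume : Measure (Fin d → ℝ)),
      Tendsto (fun n => u n x) atTop (nhds (uinf x)))
    (hinf : MemLp uinf (ENNReal.ofReal q) volume) :
    Tendsto
      (fun n => ∫ x : Fin d → ℝ,
        |‖u n x‖ ^ q - ‖u n x - uinf x‖ ^ q - ‖uinf x‖ ^ q|)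
      atTop (nhds 0) := by
  have hq₀ : 0 < q := by linarith
  obtain ⟨C, hC⟩ := hbdd
  have hdiff : ∀ n, MemLp (fun x => u n x - uinf x) (ENNReal.ofReal q) volume :=
    fun n => (hmem n).sub hinf
  refine tendsto_integral_of_le_mul_add (h := fun n x => ‖u n x - uinf x‖ ^ q)
    (k := fun x => ‖uinf x‖ ^ q) (M := (C + lpNorm uinf (ENNReal.ofReal q) volume) ^ q)
    (fun n => ((((hmem n).integrable_norm_rpow_ofReal hq₀).sub
      ((hdiff n).integrable_norm_rpow_ofReal hq₀)).sub (hinf.integrable_norm_rpow_ofReal hq₀)).abs)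
    (fun n => (hdiff n).integrable_norm_rpow_ofReal hq₀) (hinf.integrable_norm_rpow_ofReal hq₀)
    (fun _ _ => abs_nonneg _) (fun _ _ => by positivity) (fun n => ?_) (fun ε hε => ?_) ?_
  · refine (integral_norm_sub_rpow_le hq.le (hmem n) hinf).trans
      (Real.rpow_le_rpow (add_nonneg lpNorm_nonneg lpNorm_nonneg) ?_ hq₀.le)
    simpa [toReal_eLpNorm (hmem n).aestronglyMeasurable] using hC n
  · obtain ⟨C', hC'⟩ := exists_abs_norm_rpow_sub_sub_le (E := ℂ) hq.le hε
    exact ⟨C', fun n x => hC' _ _⟩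
  · filter_upwards [hae] with x hx
    have hcont : Continuous fun a : ℂ => |‖a‖ ^ q - ‖a - uinf x‖ ^ q - ‖uinf x‖ ^ q| :=
      by fun_prop (disch := exact hq₀.le)
    simpa [Function.comp_def, Real.zero_rpow hq₀.ne'] using (hcont.tendsto (uinf x)).comp hx
end

section
/- Let $\omega > 0$. The Fourier multipliers $\Phi_1(\xi_1,\xi_2) = \frac{1}{\xi_1^2 + |\xi_2| + \omega}$, $\Phi_2(\xi_1,\xi_2) = \frac{-\xi_1^2}{\xi_1^2 + |\xi_2| + \omega}$ and $\Phi_3(\xi_1,\xi_2) = \frac{|\xi_2|}{\xi_1^2 + |\xi_2| + \omega}$ satisfy the Lizorkin condition: there is $M>0$ such that $\big|\xi_1^{k_1}\xi_2^{k_2}\,\partial_{\xi_1}^{k_1}\partial_{\xi_2}^{k_2}\Phi_i(\xi_1,\xi_2)\big| \leq M$ for all $\xi_1,\xi_2 \neq 0$ and all $k_1, k_2 \in \{0,1\}$, $i=1,2,3$. -/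
set_option maxHeartbeats 1000000

noncomputable section

/-- Partial derivative in the first variable. -/
def d1 (Φ : ℝ → ℝ → ℝ) : ℝ → ℝ → ℝ := fun a b => deriv (fun x => Φ x b) a

/-- Partial derivative in the second variable. -/
def d2 (Φ : ℝ → ℝ → ℝ) : ℝ → ℝ → ℝ := fun a b => deriv (fun y => Φ a y) b

private lemma bound_div {N D M : ℝ} (hD : 0 < D) (h : |N| ≤ M * D) : |N / D| ≤ M := by
  rw [abs_div, abs_of_pos hD, div_le_iff₀ hD]; exact h

private lemma hasDerivAt_D1 (b ω a : ℝ) :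
    HasDerivAt (fun x : ℝ => x ^ 2 + |b| + ω) (2 * a) a := by
  simpa using ((hasDerivAt_pow 2 a).add_const |b|).add_const ω

private lemma hasDerivAt_D2 {b s : ℝ} (a ω : ℝ) (hs : HasDerivAt (fun y : ℝ => |y|) s b) :
    HasDerivAt (fun y : ℝ => a ^ 2 + |y| + ω) s b :=
  (hs.const_add _).add_const ω

/-- the three multipliers satisfy the Lizorkin condition. -/
theorem lizorkin_condition (ω : ℝ) (hω : 0 < ω) :
    ∃ M > 0, ∀ Φ ∈ [(fun a b : ℝ => 1 / (a^2 + |b| + ω)),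
                    (fun a b : ℝ => -a^2 / (a^2 + |b| + ω)),
                    (fun a b : ℝ => |b| / (a^2 + |b| + ω))],
      ∀ a b : ℝ, a ≠ 0 → b ≠ 0 →
        |Φ a b| ≤ M ∧ |a * d1 Φ a b| ≤ M ∧ |b * d2 Φ a b| ≤ M ∧
          |a * b * d1 (d2 Φ) a b| ≤ M := by
  obtain ⟨c, hc0, hc⟩ : ∃ c : ℝ, 0 < c ∧ ω * c = 1 :=
    ⟨ω⁻¹, inv_pos.2 hω, mul_inv_cancel₀ hω.ne'⟩
  refine ⟨6 + 6 * c, by positivity, ?_⟩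
  intro Φ hΦ a b ha hb
  -- derivative of abs at b
  obtain ⟨s, hsb, habs⟩ : ∃ s : ℝ, s * b = |b| ∧ HasDerivAt (fun y : ℝ => |y|) s b := by
    rcases hb.lt_or_gt with h | h
    · exact ⟨-1, by rw [abs_of_neg h]; ring, hasDerivAt_abs_neg h⟩
    · exact ⟨1, by rw [abs_of_pos h]; ring, hasDerivAt_abs_pos h⟩
  have hDpos : ∀ x : ℝ, 0 < x ^ 2 + |b| + ω := fun x => by positivity
  have hDne : ∀ x : ℝ, x ^ 2 + |b| + ω ≠ 0 := fun x => (hDpos x).ne'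
  have hD2ne : ∀ x : ℝ, (x ^ 2 + |b| + ω) ^ 2 ≠ 0 := fun x => pow_ne_zero 2 (hDne x)
  set D : ℝ := a ^ 2 + |b| + ω with hDdef
  have hD : 0 < D := hDpos a
  have hA : a ^ 2 ≤ D := by nlinarith [abs_nonneg b]
  have hB : |b| ≤ D := by nlinarith [sq_nonneg a]
  have hωD : ω ≤ D := by nlinarith [sq_nonneg a, abs_nonneg b]
  have hA0 : (0:ℝ) ≤ a ^ 2 := sq_nonneg a
  have hB0 : (0:ℝ) ≤ |b| := abs_nonneg b
  simp only [List.mem_cons, List.not_mem_nil, or_false] at hΦ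
  rcases hΦ with rfl | rfl | rfl
  · -- Φ₁ = 1/D
    have hd1 : d1 (fun a b : ℝ => 1 / (a^2 + |b| + ω)) a b = (0 * D - 1 * (2*a)) / D ^ 2 :=
      ((hasDerivAt_const a (1:ℝ)).div (hasDerivAt_D1 b ω a) (hDne a)).deriv
    have hd2 : ∀ x : ℝ, d2 (fun a b : ℝ => 1 / (a^2 + |b| + ω)) x b
        = (0 * (x ^ 2 + |b| + ω) - 1 * s) / (x ^ 2 + |b| + ω) ^ 2 :=
      fun x => ((hasDerivAt_const b (1:ℝ)).div (hasDerivAt_D2 x ω habs) (hDne x)).deriv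
    have hd12 : d1 (d2 (fun a b : ℝ => 1 / (a^2 + |b| + ω))) a b
        = (0 * (2*a) * D ^ 2 - (0 * D - 1 * s) * ((2:ℕ) * D ^ (2-1) * (2*a))) / (D ^ 2) ^ 2 := by
      have hfun : (fun x => d2 (fun a b : ℝ => 1 / (a^2 + |b| + ω)) x b)
          = fun x => (0 * (x ^ 2 + |b| + ω) - 1 * s) / (x ^ 2 + |b| + ω) ^ 2 :=
        funext hd2
      rw [d1, hfun]
      exact ((((hasDerivAt_D1 b ω a).const_mul 0).sub_const (1*s)).div
        ((hasDerivAt_D1 b ω a).pow 2) (hD2ne a)).deriv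
    have h0 : |(1:ℝ) / (a^2 + |b| + ω)| ≤ 6 + 6 * c :=
      bound_div hD (by rw [abs_one]; nlinarith [mul_le_mul_of_nonneg_left hωD hc0.le])
    clear_value D
    refine ⟨h0, ?_, ?_, ?_⟩
    · rw [hd1, show a * ((0 * D - 1 * (2*a)) / D ^ 2) = (-(2*a^2)) / D^2 by ring]
      exact bound_div (pow_pos hD _) (by rw [abs_neg, abs_of_nonneg (by positivity)]; nlinarith)
    · rw [hd2 a, show b * ((0 * (a ^ 2 + |b| + ω) - 1 * s) / (a ^ 2 + |b| + ω) ^ 2)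
          = (-(s*b)) / D^2 by rw [hDdef]; ring, hsb]
      exact bound_div (pow_pos hD _) (by rw [abs_neg, abs_of_nonneg hB0]; nlinarith)
    · rw [hd12, show a * b * ((0 * (2*a) * D ^ 2 - (0 * D - 1 * s) * ((2:ℕ) * D ^ (2-1) * (2*a))) / (D ^ 2) ^ 2)
          = (4 * (s*b) * a^2 * D) / D^4 by push_cast; ring, hsb]
      refine bound_div (pow_pos hD _) ?_
      rw [abs_of_nonneg (mul_nonneg (mul_nonneg (by positivity) hA0) hD.le)]
      nlinarith [mul_le_mul hA hB hB0 hD.le, mul_pos hD hD, mul_pos (mul_pos hD hD) hD,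
        mul_le_mul_of_nonneg_right (mul_le_mul hA hB hB0 hD.le) hD.le,
        mul_le_mul_of_nonneg_left hωD hc0.le,
        mul_pos (mul_pos hc0 hD) (mul_pos hD (mul_pos hD hD)),
        mul_le_mul_of_nonneg_left (mul_le_mul_of_nonneg_right (mul_le_mul hA hB hB0 hD.le) hD.le) hc0.le]
  · -- Φ₂ = -a²/D
    have hBω : |b| + ω ≤ D := by nlinarith
    have hAω : a ^ 2 + ω ≤ D := by nlinarith
    have hd1 : d1 (fun a b : ℝ => -a^2 / (a^2 + |b| + ω)) a b
        = (-((2:ℕ) * a ^ (2-1)) * D - (-a^2) * (2*a)) / D ^ 2 :=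
      (((hasDerivAt_pow 2 a).neg).div (hasDerivAt_D1 b ω a) (hDne a)).deriv
    have hd2 : ∀ x : ℝ, d2 (fun a b : ℝ => -a^2 / (a^2 + |b| + ω)) x b
        = (0 * (x ^ 2 + |b| + ω) - (-x^2) * s) / (x ^ 2 + |b| + ω) ^ 2 :=
      fun x => ((hasDerivAt_const b (-x^2)).div (hasDerivAt_D2 x ω habs) (hDne x)).deriv
    have hd12 : d1 (d2 (fun a b : ℝ => -a^2 / (a^2 + |b| + ω))) a b
        = ((0 * (2*a) - (-((2:ℕ) * a ^ (2-1))) * s) * D ^ 2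
            - (0 * D - (-a^2) * s) * ((2:ℕ) * D ^ (2-1) * (2*a))) / (D ^ 2) ^ 2 := by
      have hfun : (fun x => d2 (fun a b : ℝ => -a^2 / (a^2 + |b| + ω)) x b)
          = fun x => (0 * (x ^ 2 + |b| + ω) - (-x^2) * s) / (x ^ 2 + |b| + ω) ^ 2 :=
        funext hd2
      rw [d1, hfun]
      exact ((((hasDerivAt_D1 b ω a).const_mul 0).sub
        (((hasDerivAt_pow 2 a).neg).mul_const s)).div
        ((hasDerivAt_D1 b ω a).pow 2) (hD2ne a)).deriv
    have h0 : |-a^2 / (a^2 + |b| + ω)| ≤ 6 + 6 * c :=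
      bound_div hD (by rw [abs_neg, abs_of_nonneg hA0]; nlinarith [mul_le_mul_of_nonneg_left hωD hc0.le, mul_pos hc0 hD])
    clear_value D
    refine ⟨h0, ?_, ?_, ?_⟩
    · rw [hd1, show a * ((-((2:ℕ) * a ^ (2-1)) * D - (-a^2) * (2*a)) / D ^ 2)
          = (-(2 * a^2 * (|b| + ω))) / D ^ 2 by rw [hDdef]; push_cast; ring]
      refine bound_div (pow_pos hD _) ?_
      rw [abs_neg, abs_of_nonneg (by positivity)]
      nlinarith [mul_le_mul hA hBω (by positivity : (0:ℝ) ≤ |b| + ω) hD.le]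
    · rw [hd2 a, show b * ((0 * (a ^ 2 + |b| + ω) - (-a^2) * s) / (a ^ 2 + |b| + ω) ^ 2)
          = (a^2 * (s*b)) / D ^ 2 by rw [hDdef]; ring, hsb]
      refine bound_div (pow_pos hD _) ?_
      rw [abs_of_nonneg (by positivity)]
      nlinarith [mul_le_mul hA hB hB0 hD.le]
    · rw [hd12, show a * b * (((0 * (2*a) - (-((2:ℕ) * a ^ (2-1))) * s) * D ^ 2
            - (0 * D - (-a^2) * s) * ((2:ℕ) * D ^ (2-1) * (2*a))) / (D ^ 2) ^ 2)
          = (2 * a^2 * (s*b) * D ^ 2 - 4 * a^4 * (s*b) * D) / D ^ 4 by push_cast; ring, hsb]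
      refine bound_div (pow_pos hD _) ?_
      rw [abs_le]
      constructor <;>
        nlinarith [mul_le_mul_of_nonneg_right (mul_le_mul hA hB hB0 hD.le)
            (pow_nonneg hD.le 2),
          mul_le_mul_of_nonneg_right
            (mul_le_mul (mul_le_mul hA hA hA0 hD.le) hB hB0 (mul_nonneg hD.le hD.le)) hD.le,
          mul_nonneg (mul_nonneg hA0 hB0) (pow_nonneg hD.le 2),
          mul_nonneg (mul_nonneg (mul_nonneg hA0 hA0) hB0) hD.le,
          mul_pos (mul_pos hD hD) (mul_pos hD hD)]
  · -- Φ₃ = |b|/D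
    have hAω : a ^ 2 + ω ≤ D := by nlinarith
    have hd1 : d1 (fun a b : ℝ => |b| / (a^2 + |b| + ω)) a b
        = (0 * D - |b| * (2*a)) / D ^ 2 :=
      ((hasDerivAt_const a |b|).div (hasDerivAt_D1 b ω a) (hDne a)).deriv
    have hd2 : ∀ x : ℝ, d2 (fun a b : ℝ => |b| / (a^2 + |b| + ω)) x b
        = (s * (x ^ 2 + |b| + ω) - |b| * s) / (x ^ 2 + |b| + ω) ^ 2 :=
      fun x => (habs.div (hasDerivAt_D2 x ω habs) (hDne x)).deriv
    have hd12 : d1 (d2 (fun a b : ℝ => |b| / (a^2 + |b| + ω))) a b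
        = (s * (2*a) * D ^ 2
            - (s * D - |b| * s) * ((2:ℕ) * D ^ (2-1) * (2*a))) / (D ^ 2) ^ 2 := by
      have hfun : (fun x => d2 (fun a b : ℝ => |b| / (a^2 + |b| + ω)) x b)
          = fun x => (s * (x ^ 2 + |b| + ω) - |b| * s) / (x ^ 2 + |b| + ω) ^ 2 :=
        funext hd2
      rw [d1, hfun]
      exact ((((hasDerivAt_D1 b ω a).const_mul s).sub_const (|b| * s)).div
        ((hasDerivAt_D1 b ω a).pow 2) (hD2ne a)).deriv
    have h0 : |(|b|) / (a^2 + |b| + ω)| ≤ 6 + 6 * c :=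
      bound_div hD (by rw [abs_of_nonneg hB0]; nlinarith [mul_le_mul_of_nonneg_left hωD hc0.le, mul_pos hc0 hD])
    clear_value D
    refine ⟨h0, ?_, ?_, ?_⟩
    · rw [hd1, show a * ((0 * D - |b| * (2*a)) / D ^ 2) = (-(2 * a^2 * |b|)) / D ^ 2 by ring]
      refine bound_div (pow_pos hD _) ?_
      rw [abs_neg, abs_of_nonneg (by positivity)]
      nlinarith [mul_le_mul hA hB hB0 hD.le]
    · rw [hd2 a, show b * ((s * (a ^ 2 + |b| + ω) - |b| * s) / (a ^ 2 + |b| + ω) ^ 2)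
          = ((s*b) * (a^2 + ω)) / D ^ 2 by rw [hDdef]; ring, hsb]
      refine bound_div (pow_pos hD _) ?_
      rw [abs_of_nonneg (by positivity)]
      nlinarith [mul_le_mul hB hAω (by positivity : (0:ℝ) ≤ a^2 + ω) hD.le]
    · rw [hd12, show a * b * ((s * (2*a) * D ^ 2
            - (s * D - |b| * s) * ((2:ℕ) * D ^ (2-1) * (2*a))) / (D ^ 2) ^ 2)
          = (2 * a^2 * (s*b) * D ^ 2 - 4 * a^2 * (s*b) * (a^2 + ω) * D) / D ^ 4 by
            rw [hDdef]; push_cast; ring, hsb]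
      refine bound_div (pow_pos hD _) ?_
      rw [abs_le]
      constructor <;>
        nlinarith [mul_le_mul_of_nonneg_right (mul_le_mul hA hB hB0 hD.le)
            (pow_nonneg hD.le 2),
          mul_le_mul (mul_le_mul hA hB hB0 hD.le)
            (mul_le_mul hAω le_rfl hD.le hD.le) (mul_nonneg (by positivity) hD.le) (mul_nonneg hD.le hD.le),
          mul_nonneg (mul_nonneg hA0 hB0) (pow_nonneg hD.le 2),
          mul_nonneg (mul_nonneg (mul_nonneg hA0 hB0) (by positivity : (0:ℝ) ≤ a^2 + ω)) hD.le,
          mul_pos (mul_pos hD hD) (mul_pos hD hD)]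
end
end
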